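/- Invariance of ω2² + ω3² along left K-orbits: let I ⊆ ℝ be an interval, Y : I → ℍ differentiable with ‖Y(t)‖ = 1, and φ : I → ℝ differentiable; set Ỹ(t) = exp(φ(t) e1) · Y(t). If Y'(t)·Y(t)* = ω1(t) e1 + ω2(t) e2 + ω3(t) e3 and Ỹ'(t)·Ỹ(t)* = ω̃1(t) e1 + ω̃2(t) e2 + ω̃3(t) e3 with real-valued functions ωi, ω̃i, then ω̃2(t)² + ω̃3(t)² = ω2(t)² + ω3(t)² for all t ∈ I. -/

import Mathlib

/-!
Write `q = exp (φ e1)`. By the Leibniz rule `Ỹ' Ỹ* = φ' e1 q (Y Y*) q* + q (Y' Y*) q*`.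
Since `Y Y*` is real and `q` lies in the plane spanned by `1` and `e1`, the first term is a real
multiple of `e1`. Conjugation by `q` fixes `e1` and rotates the `e2 e3`-plane by the angle `2φ`, so
the `e2` and `e3` components of the two logarithmic derivatives differ by a rotation.
-/

open Quaternion Set

/-- The imaginary quaternion unit `i`. -/
noncomputable def e1 : ℍ[ℝ] := ⟨0, 1, 0, 0⟩
/-- The imaginary quaternion unit `j`. -/
noncomputable def e2 : ℍ[ℝ] := ⟨0, 0, 1, 0⟩
/-- The imaginary quaternion unit `k`. -/
noncomputable def e3 : ℍ[ℝ] := ⟨0, 0, 0, 1⟩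

/-- `qexp φ = exp (φ e1) = cos φ + (sin φ) e1`. -/
noncomputable def qexp (φ : ℝ) : ℍ[ℝ] :=
  (Real.cos φ : ℍ[ℝ]) + (Real.sin φ : ℍ[ℝ]) * e1

@[simp] lemma e1_re : e1.re = 0 := rfl
@[simp] lemma e1_imI : e1.imI = 1 := rfl
@[simp] lemma e1_imJ : e1.imJ = 0 := rfl
@[simp] lemma e1_imK : e1.imK = 0 := rfl
@[simp] lemma e2_re : e2.re = 0 := rfl
@[simp] lemma e2_imI : e2.imI = 0 := rfl
@[simp] lemma e2_imJ : e2.imJ = 1 := rfl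
@[simp] lemma e2_imK : e2.imK = 0 := rfl
@[simp] lemma e3_re : e3.re = 0 := rfl
@[simp] lemma e3_imI : e3.imI = 0 := rfl
@[simp] lemma e3_imJ : e3.imJ = 0 := rfl
@[simp] lemma e3_imK : e3.imK = 1 := rfl

@[simp] lemma qexp_re (φ : ℝ) : (qexp φ).re = Real.cos φ := by simp [qexp]
@[simp] lemma qexp_imI (φ : ℝ) : (qexp φ).imI = Real.sin φ := by simp [qexp]
@[simp] lemma qexp_imJ (φ : ℝ) : (qexp φ).imJ = 0 := by simp [qexp]
@[simp] lemma qexp_imK (φ : ℝ) : (qexp φ).imK = 0 := by simp [qexp]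

lemma normSq_qexp (φ : ℝ) : normSq (qexp φ) = 1 := by
  simp [normSq_def']

lemma qexp_eq_smul : qexp = fun φ => Real.cos φ • (1 : ℍ[ℝ]) + Real.sin φ • e1 := by
  funext φ
  ext <;> simp

lemma hasDerivAt_qexp (φ : ℝ) : HasDerivAt qexp (e1 * qexp φ) φ := by
  rw [qexp_eq_smul]
  refine (((Real.hasDerivAt_cos φ).smul_const (1 : ℍ[ℝ])).add
    ((Real.hasDerivAt_sin φ).smul_const e1)).congr_deriv ?_
  ext <;> simp

section PlaneOfE1

variable {q : ℍ[ℝ]}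

lemma imJ_e1_mul_mul_star_mul (hJ : q.imJ = 0) (hK : q.imK = 0) (y : ℍ[ℝ]) :
    (e1 * q * y * star (q * y)).imJ = 0 := by
  simp only [star_mul, re_mul, imI_mul, imJ_mul, imK_mul, re_star, imI_star, imJ_star, imK_star,
    e1_re, e1_imI, e1_imJ, e1_imK, hJ, hK]
  ring

lemma imK_e1_mul_mul_star_mul (hJ : q.imJ = 0) (hK : q.imK = 0) (y : ℍ[ℝ]) :
    (e1 * q * y * star (q * y)).imK = 0 := by
  simp only [star_mul, re_mul, imI_mul, imJ_mul, imK_mul, re_star, imI_star, imJ_star, imK_star,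
    e1_re, e1_imI, e1_imJ, e1_imK, hJ, hK]
  ring

lemma imJ_sq_add_imK_sq_mul_mul_star (hJ : q.imJ = 0) (hK : q.imK = 0) (x : ℍ[ℝ]) :
    (q * x * star q).imJ ^ 2 + (q * x * star q).imK ^ 2 =
      normSq q ^ 2 * (x.imJ ^ 2 + x.imK ^ 2) := by
  simp only [normSq_def', re_mul, imI_mul, imJ_mul, imK_mul, re_star, imI_star, imJ_star, imK_star,
    hJ, hK]
  ring

/-- The left-hand side is `Ỹ' Ỹ*` for `Ỹ = q Y` when `q' = r e1 q`. -/
lemma imJ_sq_add_imK_sq_leibniz_mul_star (hJ : q.imJ = 0) (hK : q.imK = 0)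
    (r : ℝ) (y y' : ℍ[ℝ]) :
    ((r • (e1 * q) * y + q * y') * star (q * y)).imJ ^ 2 +
        ((r • (e1 * q) * y + q * y') * star (q * y)).imK ^ 2 =
      normSq q ^ 2 * ((y' * star y).imJ ^ 2 + (y' * star y).imK ^ 2) := by
  have hsplit : (r • (e1 * q) * y + q * y') * star (q * y) =
      r • (e1 * q * y * star (q * y)) + q * (y' * star y) * star q := by
    rw [star_mul]
    simp only [add_mul, smul_mul_assoc, mul_assoc]
  rw [hsplit, Quaternion.imJ_add, Quaternion.imK_add, Quaternion.imJ_smul, Quaternion.imK_smul,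
    imJ_e1_mul_mul_star_mul hJ hK, imK_e1_mul_mul_star_mul hJ hK, smul_zero, zero_add, zero_add,
    imJ_sq_add_imK_sq_mul_mul_star hJ hK]

end PlaneOfE1

theorem stmt_9_general
    (I : Set ℝ)
    (Y Y' : ℝ → ℍ[ℝ]) (φ φ' : ℝ → ℝ)
    (hY : ∀ t ∈ I, HasDerivAt Y (Y' t) t)
    (hφ : ∀ t ∈ I, HasDerivAt φ (φ' t) t)
    (Yt' : ℝ → ℍ[ℝ])
    (hYt : ∀ t ∈ I, HasDerivAt (fun s => qexp (φ s) * Y s) (Yt' t) t)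
    (ω1 ω2 ω3 ωt1 ωt2 ωt3 : ℝ → ℝ)
    (hYY : ∀ t ∈ I,
      Y' t * star (Y t) =
        ((ω1 t : ℝ) : ℍ[ℝ]) * e1 + ((ω2 t : ℝ) : ℍ[ℝ]) * e2 + ((ω3 t : ℝ) : ℍ[ℝ]) * e3)
    (hYtYt : ∀ t ∈ I,
      Yt' t * star (qexp (φ t) * Y t) =
        ((ωt1 t : ℝ) : ℍ[ℝ]) * e1 + ((ωt2 t : ℝ) : ℍ[ℝ]) * e2 + ((ωt3 t : ℝ) : ℍ[ℝ]) * e3) :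
    ∀ t ∈ I, ωt2 t ^ 2 + ωt3 t ^ 2 = ω2 t ^ 2 + ω3 t ^ 2 := by
  intro t ht
  have hderiv : Yt' t = φ' t • (e1 * qexp (φ t)) * Y t + qexp (φ t) * Y' t :=
    (hYt t ht).unique (((hasDerivAt_qexp (φ t)).scomp t (hφ t ht)).mul (hY t ht))
  have h := imJ_sq_add_imK_sq_leibniz_mul_star (qexp_imJ (φ t)) (qexp_imK (φ t))
    (φ' t) (Y t) (Y' t)
  rw [← hderiv, hYtYt t ht, hYY t ht, normSq_qexp] at h
  simpa using h

theorem stmt_9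
    (I : Set ℝ) (hI : I.OrdConnected)
    (Y Y' : ℝ → ℍ[ℝ]) (φ φ' : ℝ → ℝ)
    (hY : ∀ t ∈ I, HasDerivAt Y (Y' t) t)
    (hYnorm : ∀ t ∈ I, ‖Y t‖ = 1)
    (hφ : ∀ t ∈ I, HasDerivAt φ (φ' t) t)
    (Yt' : ℝ → ℍ[ℝ])
    (hYt : ∀ t ∈ I, HasDerivAt (fun s => qexp (φ s) * Y s) (Yt' t) t)
    (ω1 ω2 ω3 ωt1 ωt2 ωt3 : ℝ → ℝ)
    (hYY : ∀ t ∈ I,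
      Y' t * star (Y t) =
        ((ω1 t : ℝ) : ℍ[ℝ]) * e1 + ((ω2 t : ℝ) : ℍ[ℝ]) * e2 + ((ω3 t : ℝ) : ℍ[ℝ]) * e3)
    (hYtYt : ∀ t ∈ I,
      Yt' t * star (qexp (φ t) * Y t) =
        ((ωt1 t : ℝ) : ℍ[ℝ]) * e1 + ((ωt2 t : ℝ) : ℍ[ℝ]) * e2 + ((ωt3 t : ℝ) : ℍ[ℝ]) * e3) :
    ∀ t ∈ I, ωt2 t ^ 2 + ωt3 t ^ 2 = ω2 t ^ 2 + ω3 t ^ 2 :=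
  stmt_9_general I Y Y' φ φ' hY hφ Yt' hYt ω1 ω2 ω3 ωt1 ωt2 ωt3 hYY hYtYt
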